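/- arXiv:1107.4794 — 4 statements merged into one kernel-verified Lean document; each statement's English description precedes it below -/
import Mathlib

section
/- Let R be a set of nonnegative reals with 0 ∈ R such that 0 is not a limit point of R. Then there exists an Urysohn metric space U with dist(U) = R if and only if R is countable and R satisfies the 4-values condition. -/
/-- The set of distances realized in a metric space. -/
def distSet (X : Type*) [MetricSpace X] : Set ℝ :=
  {r : ℝ | ∃ x y : X, dist x y = r}

/-- A metric space is homogeneous if every isometry from a finite subset into the
space extends to a bijective self-isometry. -/
def IsHomogeneous (X : Type*) [MetricSpace X] : Prop :=
  ∀ F : Set X, F.Finite →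
    ∀ f : F → X, (∀ x y : F, dist (f x) (f y) = dist (x : X) (y : X)) →
      ∃ g : X ≃ᵢ X, ∀ x : F, g (x : X) = f x

/-- A metric space is universal if it is homogeneous and embeds isometrically every
finite metric space whose distances lie in its distance set. -/
def IsUniversal (X : Type*) [MetricSpace X] : Prop :=
  IsHomogeneous X ∧
    ∀ (F : Type) [MetricSpace F] [Finite F], distSet F ⊆ distSet X →
      ∃ f : F → X, ∀ a b : F, dist (f a) (f b) = dist a b

/-- An Urysohn metric space: homogeneous, separable, complete, and embedding every
separable metric space whose distances lie in its distance set. -/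
def IsUrysohn (X : Type*) [MetricSpace X] : Prop :=
  IsHomogeneous X ∧ TopologicalSpace.SeparableSpace X ∧ CompleteSpace X ∧
    ∀ (N : Type) [MetricSpace N] [TopologicalSpace.SeparableSpace N],
      distSet N ⊆ distSet X →
        ∃ f : N → X, ∀ a b : N, dist (f a) (f b) = dist a b

/-- The triple `(a, b, c)` of nonnegative reals is metric: `|a - b| ≤ c ≤ a + b`. -/
def MetricTriple (a b c : ℝ) : Prop := |a - b| ≤ c ∧ c ≤ a + b

/-- `x ⤳ (a, b, c, d)`: the triples `(x,a,b)` and `(x,c,d)` are metric and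
`a ≥ max {b, c, d}`. -/
def Leads (x a b c d : ℝ) : Prop :=
  MetricTriple x a b ∧ MetricTriple x c d ∧ b ≤ a ∧ c ≤ a ∧ d ≤ a

/-- The 4-values condition. -/
def FourValues (R : Set ℝ) : Prop :=
  ∀ a b c d, a ∈ R → b ∈ R → c ∈ R → d ∈ R →
    (∃ x ∈ R, Leads x a b c d) → ∃ y ∈ R, Leads y a d c b

/-- `0` is a limit point of `R ⊆ [0, ∞)`. -/
def ZeroLimit (R : Set ℝ) : Prop := ∀ ε > 0, ∃ r ∈ R, 0 < r ∧ r < ε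

/-- `d` is a metric on the type `α`. -/
def IsMetricOn {α : Type*} (d : α → α → ℝ) : Prop :=
  (∀ x, d x x = 0) ∧ (∀ x y, d x y = d y x) ∧
    (∀ x y z, d x z ≤ d x y + d y z) ∧ ∀ x y, d x y = 0 → x = y

/-- A restricted type function of the metric space `X`: a positive real valued function on a
finite subset of `X`, compatible with the metric, with values in the distance set of `X`. -/
def IsRestrictedType (X : Type*) [MetricSpace X] (F : Set X) (t : F → ℝ) : Prop :=
  F.Finite ∧ (∀ x, 0 < t x) ∧
    (∀ x y : F, |t x - t y| ≤ dist (x : X) (y : X) ∧ dist (x : X) (y : X) ≤ t x + t y) ∧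
    ∀ x, t x ∈ distSet X

/-- A Katětov function of the metric space `X`: a positive real valued function on a finite
subset of `X` whose one-point extension `Sp(k)` is isometric to a subspace of `X`. -/
def IsKatetov (X : Type*) [MetricSpace X] (F : Set X) (k : F → ℝ) : Prop :=
  F.Finite ∧ (∀ x, 0 < k x) ∧
    ∃ (g : F → X) (p : X),
      (∀ x y : F, dist (g x) (g y) = dist (x : X) (y : X)) ∧ ∀ x : F, dist p (g x) = k x

/-- `p` realizes the type function `t` in `X`. -/
def Realizes {X : Type*} [MetricSpace X] (F : Set X) (t : F → ℝ) (p : X) : Prop :=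
  ∀ x : F, dist p (x : X) = t x

/-!
An Urysohn space `X` whose distances are bounded away from `0` is discrete, so separability makes
it countable, and with it `distSet X`. For the 4-values condition, given `x ⤳ (a, b, c, d)` put
triangles `(x, a, b)` and `(x, d, c)` on a common side `p₀ p₁` (universality gives the triangles,
homogeneity moves them onto the same side); the distance `y` between the two apexes satisfies
`y ⤳ (a, d, c, b)`.

Conversely, the 4-values condition is exactly two-point amalgamation for `R`-valued metrics.
Over a finite `R`-metric space, the constraints on the distance between two new points are
governed by the largest `|f i - g i|` and the smallest `f i + g i`, so one-point amalgamation
reduces to two-point amalgamation, and every restricted type extends to any larger finite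
`R`-metric space. Adding points `0, 1, 2, …` one at a time, each realizing the next type of an
enumeration in which every type recurs, yields a countable space with distance set `R` in which
every restricted type is realized. A back-and-forth argument makes it homogeneous and universal
for countable spaces; as `R` is bounded away from `0`, it is complete and every separable space
with distances in `R` is countable.
-/

section MetricTriple

variable {a b c : ℝ}

theorem metricTriple_iff : MetricTriple a b c ↔ a ≤ b + c ∧ b ≤ a + c ∧ c ≤ a + b := by
  rw [MetricTriple, abs_sub_le_iff]
  constructor
  · rintro ⟨⟨h₁, h₂⟩, h₃⟩
    exact ⟨by linarith, by linarith, h₃⟩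
  · rintro ⟨h₁, h₂, h₃⟩
    exact ⟨⟨by linarith, by linarith⟩, h₃⟩

theorem metricTriple_iff_abs : MetricTriple a b c ↔ |b - c| ≤ a ∧ a ≤ b + c := by
  rw [metricTriple_iff, abs_sub_le_iff]
  constructor
  · rintro ⟨h₁, h₂, h₃⟩
    exact ⟨⟨by linarith, by linarith⟩, h₁⟩
  · rintro ⟨⟨h₁, h₂⟩, h₃⟩
    exact ⟨h₃, by linarith, by linarith⟩

theorem MetricTriple.swap_right (h : MetricTriple a b c) : MetricTriple a c b := by
  rw [metricTriple_iff] at *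
  exact ⟨by linarith [h.1], h.2.2, h.2.1⟩

theorem MetricTriple.nonneg_left (h : MetricTriple a b c) : 0 ≤ a := by
  rw [metricTriple_iff] at h
  linarith [h.1, h.2.1, h.2.2]

theorem metricTriple_zero (ha : 0 ≤ a) : MetricTriple 0 a a := by
  rw [metricTriple_iff_abs, sub_self, abs_zero]
  exact ⟨le_rfl, by linarith⟩

theorem MetricTriple.rotate (h : MetricTriple a b c) : MetricTriple c a b := by
  rw [metricTriple_iff] at *
  exact ⟨h.2.2, by linarith [h.1], by linarith [h.2.1]⟩

theorem metricTriple_dist {X : Type*} [PseudoMetricSpace X] (x y z : X) :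
    MetricTriple (dist y z) (dist x y) (dist x z) := by
  rw [metricTriple_iff]
  refine ⟨?_, ?_, ?_⟩ <;> linarith [dist_triangle x z y, dist_triangle x y z,
    dist_triangle_left y z x, dist_comm y z]

end MetricTriple

section DistSet

variable {X : Type*} [MetricSpace X]

theorem dist_mem_distSet (x y : X) : dist x y ∈ distSet X := ⟨x, y, rfl⟩

theorem nonneg_of_mem_distSet {r : ℝ} (h : r ∈ distSet X) : 0 ≤ r := by
  obtain ⟨x, y, rfl⟩ := h
  exact dist_nonneg

theorem distSet_countable [Countable X] : (distSet X).Countable :=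
  (Set.countable_range fun p : X × X => dist p.1 p.2).mono
    fun _ ⟨x, y, h⟩ => Set.mem_range.2 ⟨(x, y), h⟩

theorem distSet_of_subsingleton [Subsingleton X] [Nonempty X] : distSet X = {0} := by
  ext r
  constructor
  · rintro ⟨x, y, rfl⟩
    simp [Subsingleton.elim x y]
  · rintro rfl
    obtain ⟨x⟩ := ‹Nonempty X›
    exact ⟨x, x, dist_self x⟩

variable {ε : ℝ}

theorem pairwise_le_dist (hsep : ∀ r ∈ distSet X, 0 < r → ε ≤ r) :
    Pairwise (ε ≤ dist · · : X → X → Prop) :=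
  fun x y hxy => hsep _ (dist_mem_distSet x y) (dist_pos.2 hxy)

theorem countable_of_separableSpace [TopologicalSpace.SeparableSpace X] (hε : 0 < ε)
    (hsep : ∀ r ∈ distSet X, 0 < r → ε ≤ r) : Countable X :=
  have := DiscreteTopology.of_forall_le_dist hε (pairwise_le_dist hsep)
  TopologicalSpace.separableSpace_iff_countable.1 ‹_›

theorem completeSpace_of_le_dist (hε : 0 < ε) (hsep : ∀ r ∈ distSet X, 0 < r → ε ≤ r) :
    CompleteSpace X :=
  have : DiscreteUniformity X :=
    ⟨Metric.uniformSpace_eq_bot.2 ⟨ε, hε, pairwise_le_dist (X := X) hsep⟩⟩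
  inferInstance

end DistSet

section Forward

variable {X : Type*} [MetricSpace X]

theorem IsHomogeneous.exists_isometryEquiv_pair (hX : IsHomogeneous X) {u v u' v' : X}
    (h : dist u' v' = dist u v) : ∃ g : X ≃ᵢ X, g u = u' ∧ g v = v' := by
  classical
  let f : ({u, v} : Set X) → X := fun z => if (z : X) = u then u' else v'
  have hf : ∀ z : ({u, v} : Set X), (z : X) = u ∧ f z = u' ∨ (z : X) = v ∧ f z = v' := by
    rintro ⟨z, hz⟩
    by_cases hzu : z = u
    · exact Or.inl ⟨hzu, if_pos hzu⟩
    · exact Or.inr ⟨hz.resolve_left hzu, if_neg hzu⟩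
  obtain ⟨g, hg⟩ := hX _ (Set.toFinite _) f fun z w => by
    rcases hf z with ⟨hz, hfz⟩ | ⟨hz, hfz⟩ <;> rcases hf w with ⟨hw, hfw⟩ | ⟨hw, hfw⟩ <;>
      simp only [hz, hfz, hw, hfw, dist_self, h, dist_comm v u, dist_comm v' u']
  refine ⟨g, hg ⟨u, .inl rfl⟩ |>.trans (if_pos rfl), (hg ⟨v, .inr rfl⟩).trans ?_⟩
  by_cases hvu : v = u
  · subst hvu
    simpa [f, eq_comm] using h
  · exact if_neg hvu

theorem IsUrysohn.isUniversal {X : Type} [MetricSpace X] (hX : IsUrysohn X) : IsUniversal X :=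
  ⟨hX.1, fun F _ _ hF => hX.2.2.2 F hF⟩

-- Fréchet's embedding of a triangle into `ℝ × ℝ` with the sup metric: each vertex goes to the
-- pair of its distances to the two ends of the side of length `x`.
theorem MetricTriple.dist_prod_eq {x a b : ℝ} (ha : 0 ≤ a) (hb : 0 ≤ b) (h : MetricTriple x a b) :
    dist ((0 : ℝ), x) (x, (0 : ℝ)) = x ∧ dist (a, b) ((0 : ℝ), x) = a ∧
      dist (a, b) (x, (0 : ℝ)) = b := by
  have hx := h.nonneg_left
  rw [metricTriple_iff] at h
  simp only [Prod.dist_eq, Real.dist_eq, zero_sub, sub_zero, abs_neg, abs_of_nonneg hx,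
    abs_of_nonneg ha, abs_of_nonneg hb, max_self, true_and]
  exact ⟨max_eq_left (abs_sub_le_iff.2 ⟨by linarith, by linarith⟩),
    max_eq_right (abs_sub_le_iff.2 ⟨by linarith, by linarith⟩)⟩

theorem IsUniversal.exists_dist_eq {X : Type} [MetricSpace X] (hX : IsUniversal X) {p₀ p₁ : X}
    {a b : ℝ} (ha : a ∈ distSet X) (hb : b ∈ distSet X) (h : MetricTriple (dist p₀ p₁) a b) :
    ∃ q, dist q p₀ = a ∧ dist q p₁ = b := by
  set x := dist p₀ p₁
  obtain ⟨h₀₁, hq₀, hq₁⟩ := h.dist_prod_eq (nonneg_of_mem_distSet ha) (nonneg_of_mem_distSet hb)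
  let N : Set (ℝ × ℝ) := {(0, x), (x, 0), (a, b)}
  have hN : distSet N ⊆ distSet X := by
    have hx : x ∈ distSet X := dist_mem_distSet p₀ p₁
    have h0 : (0 : ℝ) ∈ distSet X := ⟨p₀, p₀, dist_self p₀⟩
    rintro _ ⟨⟨u, hu⟩, ⟨v, hv⟩, rfl⟩
    rw [Subtype.dist_eq]
    simp only [N, Set.mem_insert_iff, Set.mem_singleton_iff] at hu hv
    rcases hu with rfl | rfl | rfl <;> rcases hv with rfl | rfl | rfl <;>
      simp only [dist_self, h₀₁, hq₀, hq₁, dist_comm _ ((a, b) : ℝ × ℝ),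
        dist_comm (x, (0 : ℝ))] <;> assumption
  obtain ⟨φ, hφ⟩ := hX.2 N hN
  let P₀ : N := ⟨(0, x), by simp [N]⟩
  let P₁ : N := ⟨(x, 0), by simp [N]⟩
  let Q : N := ⟨(a, b), by simp [N]⟩
  obtain ⟨g, hg₀, hg₁⟩ := hX.1.exists_isometryEquiv_pair ((hφ P₀ P₁).trans h₀₁).symm
  refine ⟨g (φ Q), ?_, ?_⟩
  · rw [← hg₀, g.dist_eq, hφ]; exact hq₀
  · rw [← hg₁, g.dist_eq, hφ]; exact hq₁

theorem IsUniversal.fourValues {X : Type} [MetricSpace X] (hX : IsUniversal X) :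
    FourValues (distSet X) := by
  rintro a b c d ha hb hc hd ⟨x, ⟨p₀, p₁, rfl⟩, hab, hcd, hba, hca, hda⟩
  obtain ⟨q, hq₀, hq₁⟩ := hX.exists_dist_eq ha hb hab
  obtain ⟨s, hs₁, hs₀⟩ := hX.exists_dist_eq (p₀ := p₁) (p₁ := p₀) hc hd (by rwa [dist_comm])
  refine ⟨dist q s, dist_mem_distSet q s, ?_, ?_, hda, hca, hba⟩
  · simpa only [dist_comm p₀, hq₀, hs₀] using metricTriple_dist p₀ q s
  · simpa only [dist_comm p₁, hs₁, hq₁] using (metricTriple_dist p₁ q s).swap_right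

end Forward

section ExtensionProperty

variable {α : Type*}

/-- `IsRestrictedType` for an arbitrary distance function `d` and value set `R`, on a finite set
`F`; the values of `t` off `F` are irrelevant. -/
def IsRestrictedTypeOn (R : Set ℝ) (d : α → α → ℝ) (F : Finset α) (t : α → ℝ) : Prop :=
  ∀ a ∈ F, t a ∈ R ∧ 0 < t a ∧ ∀ b ∈ F, MetricTriple (d a b) (t a) (t b)

theorem IsRestrictedTypeOn.congr {R : Set ℝ} {d d' : α → α → ℝ} {F : Finset α} {t : α → ℝ}
    (ht : IsRestrictedTypeOn R d F t) (h : ∀ a ∈ F, ∀ b ∈ F, d a b = d' a b) :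
    IsRestrictedTypeOn R d' F t := fun a ha =>
  ⟨(ht a ha).1, (ht a ha).2.1, fun b hb => h a ha b hb ▸ (ht a ha).2.2 b hb⟩

def HasExtensionProperty (X : Type*) [MetricSpace X] : Prop :=
  ∀ (F : Finset X) (t : X → ℝ), IsRestrictedTypeOn (distSet X) dist F t →
    ∃ p, ∀ a ∈ F, dist p a = t a

theorem hasExtensionProperty_of_subsingleton (X : Type*) [MetricSpace X] [Subsingleton X]
    [Nonempty X] : HasExtensionProperty X := by
  intro F t ht
  refine ⟨Classical.arbitrary X, fun a ha => ?_⟩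
  have h := ht a ha
  rw [distSet_of_subsingleton, Set.mem_singleton_iff] at h
  exact absurd h.2.1 h.1.not_gt

/-- A partial isometry with finite domain, as the finite set of the pairs it identifies. -/
abbrev PartialIsometry (α β : Type*) [MetricSpace α] [MetricSpace β] :=
  {f : Finset (α × β) // ∀ p ∈ f, ∀ q ∈ f, dist p.1 q.1 = dist p.2 q.2}

namespace PartialIsometry

variable {β : Type*} [MetricSpace α] [MetricSpace β]

def insertPair [DecidableEq α] [DecidableEq β] (f : PartialIsometry α β) (a : α) (b : β)
    (h : ∀ p ∈ f.1, dist p.1 a = dist p.2 b) : PartialIsometry α β :=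
  ⟨insert (a, b) f.1, by
    simp only [Finset.forall_mem_insert, dist_self, true_and]
    exact ⟨fun q hq => by rw [dist_comm, h q hq, dist_comm], fun p hp => ⟨h p hp, f.2 p hp⟩⟩⟩

def swap (f : PartialIsometry α β) : PartialIsometry β α :=
  ⟨f.1.map (Equiv.prodComm α β).toEmbedding, by
    simp only [Finset.forall_mem_map, Equiv.coe_toEmbedding, Equiv.prodComm_apply,
      Prod.fst_swap, Prod.snd_swap]
    exact fun p hp q hq => (f.2 p hp q hq).symm⟩

theorem exists_across (hβ : HasExtensionProperty β) (hαβ : distSet α ⊆ distSet β)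
    (f : PartialIsometry α β) (a : α) : ∃ b, ∀ p ∈ f.1, dist p.1 a = dist p.2 b := by
  classical
  by_cases ha : ∃ b, (a, b) ∈ f.1
  · obtain ⟨b, hab⟩ := ha
    exact ⟨b, fun p hp => f.2 p hp _ hab⟩
  push Not at ha
  -- the type of `a` over the domain of `f`, transported to the range of `f`
  let t : β → ℝ := fun y => if h : ∃ p ∈ f.1, p.2 = y then dist a h.choose.1 else 0
  have ht : ∀ p ∈ f.1, t p.2 = dist a p.1 := by
    intro p hp
    have h : ∃ p' ∈ f.1, p'.2 = p.2 := ⟨p, hp, rfl⟩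
    obtain ⟨hp', hp'p⟩ := h.choose_spec
    have : h.choose.1 = p.1 := dist_eq_zero.1 <| by rw [f.2 _ hp' p hp, hp'p, dist_self]
    simp only [t, dif_pos h, this]
  obtain ⟨b, hb⟩ := hβ (f.1.image Prod.snd) t <| by
    simp only [IsRestrictedTypeOn, Finset.forall_mem_image]
    intro p hp
    refine ⟨by rw [ht p hp]; exact hαβ (dist_mem_distSet a p.1),
      by rw [ht p hp]; exact dist_pos.2 fun h => ha p.2 (h ▸ hp), fun q hq => ?_⟩
    rw [ht p hp, ht q hq, ← f.2 p hp q hq]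
    exact metricTriple_dist a p.1 q.1
  exact ⟨b, fun p hp => by
    rw [dist_comm, ← ht p hp, ← hb _ (Finset.mem_image_of_mem _ hp), dist_comm]⟩

variable (β) in
def definedAtLeft (hβ : HasExtensionProperty β) (hαβ : distSet α ⊆ distSet β) (a : α) :
    Order.Cofinal (PartialIsometry α β) where
  carrier := {f | ∃ b, (a, b) ∈ f.1}
  isCofinal f := by
    classical
    obtain ⟨b, hb⟩ := exists_across hβ hαβ f a
    exact ⟨f.insertPair a b hb, ⟨b, Finset.mem_insert_self _ _⟩, Finset.subset_insert _ _⟩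

variable (α) in
def definedAtRight (hα : HasExtensionProperty α) (hβα : distSet β ⊆ distSet α) (b : β) :
    Order.Cofinal (PartialIsometry α β) where
  carrier := {f | ∃ a, (a, b) ∈ f.1}
  isCofinal f := by
    classical
    obtain ⟨a, ha⟩ := exists_across hα hβα f.swap b
    refine ⟨f.insertPair a b fun p hp => ?_, ⟨a, Finset.mem_insert_self _ _⟩,
      Finset.subset_insert _ _⟩
    simpa [dist_comm] using (ha _ (Finset.mem_map_of_mem _ hp)).symm

theorem dist_eq_of_mem_ideal {I : Order.Ideal (PartialIsometry α β)} {f g : PartialIsometry α β}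
    (hf : f ∈ I) (hg : g ∈ I) {p q : α × β} (hp : p ∈ f.1) (hq : q ∈ g.1) :
    dist p.1 q.1 = dist p.2 q.2 := by
  obtain ⟨h, -, hfh, hgh⟩ := I.directed _ hf _ hg
  exact h.2 p (hfh hp) q (hgh hq)

end PartialIsometry

end ExtensionProperty

section BackAndForth

open PartialIsometry

variable {X : Type*} [MetricSpace X]

theorem exists_isometry_of_hasExtensionProperty {Y : Type*} [MetricSpace Y] [Countable Y]
    (hX : HasExtensionProperty X) (hYX : distSet Y ⊆ distSet X) :
    ∃ φ : Y → X, ∀ a b, dist (φ a) (φ b) = dist a b := by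
  have := Encodable.ofCountable Y
  let I := Order.idealOfCofinals (⟨∅, by simp⟩ : PartialIsometry Y X) (definedAtLeft X hX hYX)
  have h a : ∃ b, ∃ f ∈ I, (a, b) ∈ f.1 :=
    let ⟨f, ⟨b, hb⟩, hf⟩ := Order.cofinal_meets_idealOfCofinals _ (definedAtLeft X hX hYX) a
    ⟨b, f, hf, hb⟩
  choose φ f hf hφ using h
  exact ⟨φ, fun a b => (dist_eq_of_mem_ideal (hf a) (hf b) (hφ a) (hφ b)).symm⟩

theorem isHomogeneous_of_hasExtensionProperty [Countable X] (hX : HasExtensionProperty X) :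
    IsHomogeneous X := by
  intro F hF f hf
  have := Encodable.ofCountable X
  have := hF.to_subtype
  let graph : PartialIsometry X X :=
    ⟨(Set.finite_range fun x : F => ((x : X), f x)).toFinset, by
      simp only [Set.Finite.mem_toFinset, Set.forall_mem_range]
      exact fun x y => (hf x y).symm⟩
  let D := Sum.elim (definedAtLeft X hX le_rfl) (definedAtRight X hX le_rfl)
  let I := Order.idealOfCofinals graph D
  have hl a : ∃ b, ∃ g ∈ I, (a, b) ∈ g.1 :=
    let ⟨g, ⟨b, hb⟩, hg⟩ := Order.cofinal_meets_idealOfCofinals graph D (Sum.inl a)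
    ⟨b, g, hg, hb⟩
  have hr b : ∃ a, ∃ g ∈ I, (a, b) ∈ g.1 :=
    let ⟨g, ⟨a, ha⟩, hg⟩ := Order.cofinal_meets_idealOfCofinals graph D (Sum.inr b)
    ⟨a, g, hg, ha⟩
  choose φ g hg hφ using hl
  choose ψ g' hg' hψ using hr
  refine ⟨⟨⟨φ, ψ, fun a => ?_, fun b => ?_⟩, Isometry.of_dist_eq fun a b => ?_⟩, fun x => ?_⟩
  · simpa using (dist_eq_of_mem_ideal (hg' (φ a)) (hg a) (hψ (φ a)) (hφ a)).symm
  · simpa using (dist_eq_of_mem_ideal (hg (ψ b)) (hg' b) (hφ (ψ b)) (hψ b)).symm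
  · exact (dist_eq_of_mem_ideal (hg a) (hg b) (hφ a) (hφ b)).symm
  · have hx : ((x : X), f x) ∈ graph.1 := by simp [graph]
    simpa using (dist_eq_of_mem_ideal (hg x) (Order.mem_idealOfCofinals _ _) (hφ x) hx).symm

theorem isUrysohn_of_hasExtensionProperty {X : Type} [MetricSpace X] [Countable X] {ε : ℝ}
    (hε : 0 < ε) (hsep : ∀ r ∈ distSet X, 0 < r → ε ≤ r) (hX : HasExtensionProperty X) :
    IsUrysohn X := by
  refine ⟨isHomogeneous_of_hasExtensionProperty hX, inferInstance,
    completeSpace_of_le_dist hε hsep, fun N _ _ hN => ?_⟩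
  have := countable_of_separableSpace hε fun r hr => hsep r (hN hr)
  exact exists_isometry_of_hasExtensionProperty hX hN

end BackAndForth

section Amalgamation

variable {R : Set ℝ}

/-- Two-point amalgamation: points at distances `f₀, f₁` and `g₀, g₁` from the two ends of a
segment of length `x` can be placed at some distance `s ∈ R` from each other. -/
theorem FourValues.exists_amalgam (h4 : FourValues R) {x f₀ f₁ g₀ g₁ : ℝ} (hx : x ∈ R)
    (hf₀ : f₀ ∈ R) (hf₁ : f₁ ∈ R) (hg₀ : g₀ ∈ R) (hg₁ : g₁ ∈ R)
    (hf : MetricTriple x f₀ f₁) (hg : MetricTriple x g₀ g₁) :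
    ∃ s ∈ R, MetricTriple s f₀ g₀ ∧ MetricTriple s f₁ g₁ := by
  -- when `f₀` is the largest of the four values, this is the 4-values condition itself
  have largest_f₀ : ∀ {f₀ f₁ g₀ g₁ : ℝ}, f₀ ∈ R → f₁ ∈ R → g₀ ∈ R → g₁ ∈ R →
      MetricTriple x f₀ f₁ → MetricTriple x g₀ g₁ → f₁ ≤ f₀ → g₀ ≤ f₀ → g₁ ≤ f₀ →
      ∃ s ∈ R, MetricTriple s f₀ g₀ ∧ MetricTriple s f₁ g₁ := by
    intro f₀ f₁ g₀ g₁ hf₀ hf₁ hg₀ hg₁ hf hg h₁ h₂ h₃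
    obtain ⟨s, hs, hs₀, hs₁, -⟩ :=
      h4 f₀ f₁ g₁ g₀ hf₀ hf₁ hg₁ hg₀ ⟨x, hx, hf, hg.swap_right, h₁, h₃, h₂⟩
    exact ⟨s, hs, hs₀, hs₁.swap_right⟩
  have largest_f : ∀ {f₀ f₁ g₀ g₁ : ℝ}, f₀ ∈ R → f₁ ∈ R → g₀ ∈ R → g₁ ∈ R →
      MetricTriple x f₀ f₁ → MetricTriple x g₀ g₁ → g₀ ≤ max f₀ f₁ → g₁ ≤ max f₀ f₁ →
      ∃ s ∈ R, MetricTriple s f₀ g₀ ∧ MetricTriple s f₁ g₁ := by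
    intro f₀ f₁ g₀ g₁ hf₀ hf₁ hg₀ hg₁ hf hg h₀ h₁
    rcases le_total f₁ f₀ with h | h
    · rw [max_eq_left h] at h₀ h₁
      exact largest_f₀ hf₀ hf₁ hg₀ hg₁ hf hg h h₀ h₁
    · rw [max_eq_right h] at h₀ h₁
      obtain ⟨s, hs, h₁', h₀'⟩ := largest_f₀ hf₁ hf₀ hg₁ hg₀ hf.swap_right hg.swap_right h h₁ h₀
      exact ⟨s, hs, h₀', h₁'⟩
  rcases le_total (max g₀ g₁) (max f₀ f₁) with h | h
  · exact largest_f hf₀ hf₁ hg₀ hg₁ hf hg ((le_max_left _ _).trans h) ((le_max_right _ _).trans h)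
  · obtain ⟨s, hs, h₀, h₁⟩ :=
      largest_f hg₀ hg₁ hf₀ hf₁ hg hf ((le_max_left _ _).trans h) ((le_max_right _ _).trans h)
    exact ⟨s, hs, h₀.swap_right, h₁.swap_right⟩

variable {ι : Type*} {d : ι → ι → ℝ} {F : Finset ι} {f g : ι → ℝ}

theorem FourValues.exists_amalgam_finset (h4 : FourValues R) (hF : F.Nonempty)
    (hd : ∀ i ∈ F, ∀ j ∈ F, d i j ∈ R) (hf : IsRestrictedTypeOn R d F f)
    (hg : IsRestrictedTypeOn R d F g) : ∃ s ∈ R, ∀ i ∈ F, MetricTriple s (f i) (g i) := by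
  -- only the constraints at the largest `|f i - g i|` and the smallest `f i + g i` matter
  obtain ⟨i₀, hi₀, hmax⟩ := F.exists_max_image (fun i => |f i - g i|) hF
  obtain ⟨i₁, hi₁, hmin⟩ := F.exists_min_image (fun i => f i + g i) hF
  obtain ⟨s, hs, hs₀, hs₁⟩ := h4.exists_amalgam (hd i₀ hi₀ i₁ hi₁) (hf i₀ hi₀).1 (hf i₁ hi₁).1
    (hg i₀ hi₀).1 (hg i₁ hi₁).1 ((hf i₀ hi₀).2.2 i₁ hi₁) ((hg i₀ hi₀).2.2 i₁ hi₁)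
  rw [metricTriple_iff_abs] at hs₀ hs₁
  exact ⟨s, hs, fun i hi =>
    metricTriple_iff_abs.2 ⟨(hmax i hi).trans hs₀.1, hs₁.2.trans (hmin i hi)⟩⟩

theorem FourValues.exists_pos_amalgam (h4 : FourValues R) (hpos : ∃ r ∈ R, 0 < r)
    (hd : ∀ i ∈ F, ∀ j ∈ F, d i j ∈ R) (hf : IsRestrictedTypeOn R d F f)
    (hg : IsRestrictedTypeOn R d F g) : ∃ s ∈ R, 0 < s ∧ ∀ i ∈ F, MetricTriple s (f i) (g i) := by
  obtain rfl | hF := F.eq_empty_or_nonempty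
  · obtain ⟨r, hr, hr0⟩ := hpos
    exact ⟨r, hr, hr0, by simp⟩
  obtain ⟨s, hs, hsF⟩ := h4.exists_amalgam_finset hF hd hf hg
  simp only [metricTriple_iff_abs] at hsF
  rcases (abs_nonneg _).trans (hsF _ hF.choose_spec).1 |>.lt_or_eq with hs0 | hs0
  · exact ⟨s, hs, hs0, fun i hi => metricTriple_iff_abs.2 (hsF i hi)⟩
  -- `s = 0` forces `f = g` on `F`, and then the least value of `f` will do
  have hfg : ∀ i ∈ F, f i = g i := fun i hi =>
    sub_eq_zero.1 (abs_nonpos_iff.1 (hs0 ▸ (hsF i hi).1))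
  obtain ⟨i₁, hi₁, hmin⟩ := F.exists_min_image f hF
  refine ⟨f i₁, (hf i₁ hi₁).1, (hf i₁ hi₁).2.1, fun i hi => ?_⟩
  rw [metricTriple_iff, ← hfg i hi]
  have := hmin i hi
  have := (hf i₁ hi₁).2.1
  exact ⟨by linarith, by linarith, by linarith⟩

end Amalgamation

section FiniteRMetric

variable {R : Set ℝ} {α : Type*} {d : α → α → ℝ} {G F : Finset α}

structure IsRMetricOn (R : Set ℝ) (d : α → α → ℝ) (G : Finset α) : Prop where
  mem : ∀ a ∈ G, ∀ b ∈ G, d a b ∈ R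
  self : ∀ a ∈ G, d a a = 0
  pos : ∀ a ∈ G, ∀ b ∈ G, a ≠ b → 0 < d a b
  comm : ∀ a ∈ G, ∀ b ∈ G, d a b = d b a
  triangle : ∀ a ∈ G, ∀ b ∈ G, ∀ c ∈ G, d a c ≤ d a b + d b c

theorem IsRMetricOn.mono (hd : IsRMetricOn R d G) (hFG : F ⊆ G) : IsRMetricOn R d F where
  mem a ha b hb := hd.mem a (hFG ha) b (hFG hb)
  self a ha := hd.self a (hFG ha)
  pos a ha b hb := hd.pos a (hFG ha) b (hFG hb)
  comm a ha b hb := hd.comm a (hFG ha) b (hFG hb)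
  triangle a ha b hb c hc := hd.triangle a (hFG ha) b (hFG hb) c (hFG hc)

theorem IsRMetricOn.metricTriple (hd : IsRMetricOn R d G) {a b c : α} (ha : a ∈ G) (hb : b ∈ G)
    (hc : c ∈ G) : MetricTriple (d a b) (d c a) (d c b) := by
  rw [metricTriple_iff_abs, abs_sub_le_iff]
  have := hd.triangle c hc b hb a ha
  have := hd.triangle c hc a ha b hb
  have := hd.triangle a ha c hc b hb
  rw [hd.comm a ha c hc, hd.comm b hb a ha] at *
  exact ⟨⟨by linarith, by linarith⟩, by linarith⟩

theorem IsRMetricOn.congr {d' : α → α → ℝ} (hd : IsRMetricOn R d G)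
    (h : ∀ a ∈ G, ∀ b ∈ G, d a b = d' a b) : IsRMetricOn R d' G where
  mem a ha b hb := h a ha b hb ▸ hd.mem a ha b hb
  self a ha := h a ha a ha ▸ hd.self a ha
  pos a ha b hb := h a ha b hb ▸ hd.pos a ha b hb
  comm a ha b hb := h a ha b hb ▸ h b hb a ha ▸ hd.comm a ha b hb
  triangle a ha b hb c hc := h a ha c hc ▸ h a ha b hb ▸ h b hb c hc ▸ hd.triangle a ha b hb c hc

variable [DecidableEq α] {k : α} {w : α → ℝ}

def extendDist (d : α → α → ℝ) (k : α) (w : α → ℝ) (a b : α) : ℝ :=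
  if a = k then if b = k then 0 else w b else if b = k then w a else d a b

@[simp] theorem extendDist_self : extendDist d k w k k = 0 := by simp [extendDist]

theorem extendDist_left {b : α} (hb : b ≠ k) : extendDist d k w k b = w b := by
  simp [extendDist, hb]

theorem extendDist_right {a : α} (ha : a ≠ k) : extendDist d k w a k = w a := by
  simp [extendDist, ha]

theorem extendDist_of_ne {a b : α} (ha : a ≠ k) (hb : b ≠ k) : extendDist d k w a b = d a b := by
  simp [extendDist, ha, hb]

theorem IsRMetricOn.extendDist (hd : IsRMetricOn R d G) (h0 : 0 ∈ R) (hk : k ∉ G)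
    (hw : IsRestrictedTypeOn R d G w) : IsRMetricOn R (extendDist d k w) (insert k G) := by
  have hne : ∀ a ∈ G, a ≠ k := fun a ha => ne_of_mem_of_not_mem ha hk
  constructor <;>
    simp +contextual only [Finset.forall_mem_insert, extendDist_self, extendDist_left,
      extendDist_right, extendDist_of_ne, hne, ne_eq, not_false_eq_true, not_true_eq_false,
      true_and, and_true, false_implies, true_implies, implies_true, h0, add_zero, zero_add,
      le_refl]
  · exact ⟨fun a ha => (hw a ha).1, fun a ha => ⟨(hw a ha).1, hd.mem a ha⟩⟩
  · exact hd.self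
  · exact ⟨fun a ha _ => (hw a ha).2.1, fun a ha => ⟨(hw a ha).2.1, hd.pos a ha⟩⟩
  · exact hd.comm
  · have hw' a (ha : a ∈ G) b (hb : b ∈ G) := metricTriple_iff.1 ((hw a ha).2.2 b hb)
    refine ⟨fun a ha => ⟨by linarith [(hw a ha).2.1], fun b hb => ?_⟩, fun a ha =>
      ⟨fun b hb => ?_, fun b hb => ⟨?_, hd.triangle a ha b hb⟩⟩⟩ <;> linarith [hw' a ha b hb]

theorem IsRMetricOn.isRestrictedTypeOn
    (hd : IsRMetricOn R d (insert k F)) (hk : k ∉ F) : IsRestrictedTypeOn R d F (d k) := by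
  have hkF := Finset.mem_insert_self k F
  have hF : ∀ {a}, a ∈ F → a ∈ insert k F := Finset.mem_insert_of_mem
  exact fun a ha => ⟨hd.mem k hkF a (hF ha),
    hd.pos k hkF a (hF ha) (ne_of_mem_of_not_mem ha hk).symm,
    fun b hb => hd.metricTriple (hF ha) (hF hb) hkF⟩

theorem IsRestrictedTypeOn.exists_extend_insert (h4 : FourValues R)
    (hpos : ∃ r ∈ R, 0 < r) {t : α → ℝ} (hd : IsRMetricOn R d (insert k F))
    (hk : k ∉ F) (ht : IsRestrictedTypeOn R d F t) :
    ∃ t', IsRestrictedTypeOn R d (insert k F) t' ∧ ∀ a ∈ F, t' a = t a := by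
  have hF : ∀ {a}, a ∈ F → a ∈ insert k F := Finset.mem_insert_of_mem
  obtain ⟨s, hs, hs0, hsF⟩ := h4.exists_pos_amalgam hpos
    (fun a ha b hb => hd.mem a (hF ha) b (hF hb)) ht (hd.isRestrictedTypeOn hk)
  have ht' : ∀ a ∈ F, Function.update t k s a = t a := fun a ha =>
    Function.update_of_ne (ne_of_mem_of_not_mem ha hk) _ _
  have hk' : Function.update t k s k = s := Function.update_self k s t
  have hkF := Finset.mem_insert_self k F
  refine ⟨Function.update t k s, fun a ha => ?_, ht'⟩
  rcases Finset.mem_insert.1 ha with rfl | ha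
  · rw [hk']
    refine ⟨hs, hs0, fun b hb => ?_⟩
    rcases Finset.mem_insert.1 hb with rfl | hb
    · rw [hk', hd.self _ hkF]
      exact metricTriple_zero hs0.le
    · rw [ht' b hb]
      exact (hsF b hb).rotate
  · rw [ht' a ha]
    refine ⟨(ht a ha).1, (ht a ha).2.1, fun b hb => ?_⟩
    rcases Finset.mem_insert.1 hb with hbk | hb
    · rw [hbk, hk', hd.comm a (hF ha) k hkF]
      exact (hsF a ha).rotate.swap_right
    · rw [ht' b hb]
      exact (ht a ha).2.2 b hb

theorem IsRestrictedTypeOn.exists_extend (h4 : FourValues R)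
    (hpos : ∃ r ∈ R, 0 < r) {t : α → ℝ} (hd : IsRMetricOn R d G) (hFG : F ⊆ G)
    (ht : IsRestrictedTypeOn R d F t) :
    ∃ t', IsRestrictedTypeOn R d G t' ∧ ∀ a ∈ F, t' a = t a := by
  suffices ∀ S ⊆ G, ∃ t', IsRestrictedTypeOn R d (F ∪ S) t' ∧ ∀ a ∈ F, t' a = t a by
    simpa [Finset.union_eq_right.2 hFG] using this G subset_rfl
  intro S
  induction S using Finset.induction_on with
  | empty => exact fun _ => ⟨t, by simpa using ht, fun _ _ => rfl⟩
  | insert k S _ ih =>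
    intro hS
    obtain ⟨t', ht', ht'F⟩ := ih ((Finset.subset_insert k S).trans hS)
    rw [Finset.union_insert]
    by_cases hk : k ∈ F ∪ S
    · rw [Finset.insert_eq_of_mem hk]
      exact ⟨t', ht', ht'F⟩
    obtain ⟨t'', ht'', ht''F⟩ := ht'.exists_extend_insert h4 hpos (hd.mono <|
      Finset.insert_subset (hS (Finset.mem_insert_self k S))
        (Finset.union_subset hFG ((Finset.subset_insert k S).trans hS))) hk
    exact ⟨t'', ht'', fun a ha => (ht''F a (Finset.mem_union_left S ha)).trans (ht'F a ha)⟩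

end FiniteRMetric

abbrev IsMetricOn.toMetricSpace {α : Type*} {d : α → α → ℝ} (h : IsMetricOn d) :
    MetricSpace α where
  dist := d
  dist_self := h.1
  dist_comm := h.2.1
  dist_triangle := h.2.2.1
  eq_of_dist_eq_zero := h.2.2.2 _ _

section Construction

noncomputable def task (n : ℕ) : Finset (ℕ × ℕ) := (Encodable.decode n.unpair.1).getD ∅

theorem exists_task_eq (T : Finset (ℕ × ℕ)) (m : ℕ) : ∃ n, m ≤ n ∧ task n = T :=
  ⟨Nat.pair (Encodable.encode T) m, Nat.right_le_pair _ _, by simp [task]⟩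

variable (e : ℕ → ℝ)

open Classical in
/-- The distances from a new point `n` to the points `0, …, n - 1` of `d`: a restricted type that
puts the new point at distance `e m` from `i` for all `(i, m) ∈ task n`, if there is one. -/
noncomputable def nextRow (n : ℕ) (d : ℕ → ℕ → ℝ) : ℕ → ℝ :=
  if h : ∃ w, IsRestrictedTypeOn (Set.range e) d (Finset.range n) w ∧
      ∀ q ∈ task n, w q.1 = e q.2 then h.choose
  else if h' : ∃ w, IsRestrictedTypeOn (Set.range e) d (Finset.range n) w then h'.choose else 0

noncomputable def stage : ℕ → ℕ → ℕ → ℝ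
  | 0 => 0
  | n + 1 => extendDist (stage n) n (nextRow e n (stage n))

noncomputable def urysohnDist (i j : ℕ) : ℝ := stage e (max i j + 1) i j

variable {e} {n : ℕ} {d : ℕ → ℕ → ℝ}

theorem nextRow_isRestrictedTypeOn
    (h : ∃ w, IsRestrictedTypeOn (Set.range e) d (Finset.range n) w) :
    IsRestrictedTypeOn (Set.range e) d (Finset.range n) (nextRow e n d) := by
  unfold nextRow
  split_ifs with h'
  · exact h'.choose_spec.1
  · exact h.choose_spec

theorem nextRow_task (h : ∃ w, IsRestrictedTypeOn (Set.range e) d (Finset.range n) w ∧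
      ∀ q ∈ task n, w q.1 = e q.2) : ∀ q ∈ task n, nextRow e n d q.1 = e q.2 := by
  rw [nextRow, dif_pos h]
  exact h.choose_spec.2

theorem stage_succ_of_lt {i j : ℕ} (hi : i < n) (hj : j < n) :
    stage e (n + 1) i j = stage e n i j :=
  extendDist_of_ne hi.ne hj.ne

theorem stage_eq_of_le {m i j : ℕ} (hnm : n ≤ m) (hi : i < n) (hj : j < n) :
    stage e m i j = stage e n i j := by
  induction m, hnm using Nat.le_induction with
  | base => rfl
  | succ m hnm ih => rw [stage_succ_of_lt (hi.trans_le hnm) (hj.trans_le hnm), ih]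

theorem urysohnDist_eq_stage {i j : ℕ} (hi : i < n) (hj : j < n) :
    urysohnDist e i j = stage e n i j :=
  (stage_eq_of_le (by omega) (by omega) (by omega)).symm

theorem urysohnDist_new {i : ℕ} (hi : i < n) : urysohnDist e n i = nextRow e n (stage e n) i := by
  rw [urysohnDist, max_eq_left hi.le, stage, extendDist_left hi.ne]

variable (h0 : 0 ∈ Set.range e) (h4 : FourValues (Set.range e)) (hpos : ∃ r ∈ Set.range e, 0 < r)
include h0 h4 hpos

theorem isRMetricOn_stage : ∀ n, IsRMetricOn (Set.range e) (stage e n) (Finset.range n)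
  | 0 => ⟨by simp, by simp, by simp, by simp, by simp⟩
  | n + 1 => by
    have hd := isRMetricOn_stage n
    obtain ⟨w, hw, -⟩ := IsRestrictedTypeOn.exists_extend h4 hpos hd (Finset.empty_subset _)
      (t := 0) (by simp [IsRestrictedTypeOn])
    rw [Finset.range_add_one]
    exact hd.extendDist h0 Finset.notMem_range_self (nextRow_isRestrictedTypeOn ⟨w, hw⟩)

theorem isRMetricOn_urysohnDist (n : ℕ) :
    IsRMetricOn (Set.range e) (urysohnDist e) (Finset.range n) :=
  (isRMetricOn_stage h0 h4 hpos n).congr fun _ ha _ hb =>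
    (urysohnDist_eq_stage (Finset.mem_range.1 ha) (Finset.mem_range.1 hb)).symm

theorem isMetricOn_urysohnDist : IsMetricOn (urysohnDist e) := by
  have h := isRMetricOn_urysohnDist h0 h4 hpos
  have hmem {i n : ℕ} (hi : i < n) : i ∈ Finset.range n := Finset.mem_range.2 hi
  refine ⟨fun i => (h (i + 1)).self i (hmem (by omega)),
    fun i j => (h (i + j + 1)).comm i (hmem (by omega)) j (hmem (by omega)),
    fun i j k => (h (i + j + k + 1)).triangle i (hmem (by omega)) j (hmem (by omega)) k
      (hmem (by omega)), fun i j hij => ?_⟩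
  by_contra hne
  exact ((h (i + j + 1)).pos i (hmem (by omega)) j (hmem (by omega)) hne).ne' hij

theorem urysohnDist_mem (i j : ℕ) : urysohnDist e i j ∈ Set.range e :=
  (isRMetricOn_urysohnDist h0 h4 hpos (i + j + 1)).mem i (by simp) j (by simp)

theorem exists_urysohnDist_eq {F : Finset ℕ} {t : ℕ → ℝ}
    (ht : IsRestrictedTypeOn (Set.range e) (urysohnDist e) F t) :
    ∃ p, ∀ a ∈ F, urysohnDist e p a = t a := by
  have hc : ∀ a ∈ F, e (Function.invFun e (t a)) = t a := fun a ha =>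
    Function.invFun_eq (ht a ha).1
  -- `t` is encoded as a task, which comes up at some stage `n` where all of `F` is present
  obtain ⟨n, hn, hT⟩ :=
    exists_task_eq (F.image fun a => (a, Function.invFun e (t a))) (F.sup id + 1)
  have hFn : ∀ a ∈ F, a < n := fun a ha => (Nat.lt_succ_of_le (F.le_sup (f := id) ha)).trans_le hn
  have ht' : IsRestrictedTypeOn (Set.range e) (stage e n) F t :=
    ht.congr fun a ha b hb => urysohnDist_eq_stage (hFn a ha) (hFn b hb)
  obtain ⟨w, hw, hwF⟩ := ht'.exists_extend h4 hpos (isRMetricOn_stage h0 h4 hpos n)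
    fun a ha => Finset.mem_range.2 (hFn a ha)
  have hrow := nextRow_task ⟨w, hw, by
    simp only [hT, Finset.forall_mem_image]
    exact fun a ha => (hwF a ha).trans (hc a ha).symm⟩
  refine ⟨n, fun a ha => ?_⟩
  rw [urysohnDist_new (hFn a ha), ← hc a ha]
  exact hrow _ (hT ▸ Finset.mem_image_of_mem _ ha)

variable (hR : Set.range e ⊆ Set.Ici 0)
include hR

theorem setOf_urysohnDist_eq : {r | ∃ i j, urysohnDist e i j = r} = Set.range e := by
  refine Set.Subset.antisymm (fun _ ⟨i, j, hij⟩ => hij ▸ urysohnDist_mem h0 h4 hpos i j)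
    fun r hr => ?_
  rcases (Set.mem_Ici.1 (hR hr)).eq_or_lt with rfl | hr0
  · exact ⟨0, 0, (isMetricOn_urysohnDist h0 h4 hpos).1 0⟩
  obtain ⟨p, hp⟩ := exists_urysohnDist_eq h0 h4 hpos (F := {0}) (t := fun _ => r) <| by
    simpa [IsRestrictedTypeOn, (isMetricOn_urysohnDist h0 h4 hpos).1 0, hr, hr0] using
      metricTriple_zero hr0.le
  exact ⟨p, 0, hp 0 (Finset.mem_singleton_self 0)⟩

end Construction

theorem exists_countable_hasExtensionProperty {R : Set ℝ} (hR : R ⊆ Set.Ici 0) (h0 : 0 ∈ R)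
    (hc : R.Countable) (h4 : FourValues R) :
    ∃ (X : Type) (_ : MetricSpace X), Countable X ∧ distSet X = R ∧ HasExtensionProperty X := by
  by_cases hpos : ∃ r ∈ R, 0 < r
  swap
  · refine ⟨PUnit, inferInstance, inferInstance, ?_, hasExtensionProperty_of_subsingleton PUnit⟩
    rw [distSet_of_subsingleton, eq_comm, Set.eq_singleton_iff_unique_mem]
    exact ⟨h0, fun r hr => le_antisymm (not_lt.1 fun h => hpos ⟨r, hr, h⟩) (hR hr)⟩
  obtain ⟨e, rfl⟩ := hc.exists_eq_range ⟨0, h0⟩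
  have hdist := setOf_urysohnDist_eq h0 h4 hpos hR
  exact ⟨ℕ, (isMetricOn_urysohnDist h0 h4 hpos).toMetricSpace, inferInstance, hdist,
    fun F t ht => exists_urysohnDist_eq h0 h4 hpos (hdist ▸ ht)⟩

/-- For `0 ∈ R ⊆ [0,∞)` such that `0` is not a limit point of `R`, there
exists an Urysohn metric space with distance set `R` iff `R` is countable and satisfies
the 4-values condition. -/
theorem statement1 (R : Set ℝ) (hR : R ⊆ Set.Ici 0) (h0 : (0 : ℝ) ∈ R)
    (hlim : ¬ ZeroLimit R) :
    (∃ (X : Type) (inst : MetricSpace X), @IsUrysohn X inst ∧ @distSet X inst = R) ↔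
      R.Countable ∧ FourValues R := by
  obtain ⟨ε, hε, hRε⟩ : ∃ ε > 0, ∀ r ∈ R, 0 < r → ε ≤ r := by
    simpa [ZeroLimit] using hlim
  constructor
  · rintro ⟨X, _, hX, rfl⟩
    have := hX.2.1
    have := countable_of_separableSpace hε hRε
    exact ⟨distSet_countable, hX.isUniversal.fourValues⟩
  · rintro ⟨hc, h4⟩
    obtain ⟨X, _, _, rfl, hX⟩ := exists_countable_hasExtensionProperty hR h0 hc h4
    exact ⟨X, _, isUrysohn_of_hasExtensionProperty hε hRε hX, rfl⟩
end

section
/- Any two Urysohn metric spaces U and V with dist(U) = dist(V) are isometric, i.e., there exists a bijective isometry from U onto V. -/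
/-!
Back and forth. Equal distance sets let each Urysohn space embed every finite subspace of the
other, and homogeneity then extends any finite partial isometry between them by one more point
on either side. Alternately adding the points of dense sequences of `U` and of `V` yields a
distance preserving correspondence between dense subsets; by completeness of `V` it extends to
an isometry `U → V`, whose range is complete, hence closed, and dense, hence everything.
-/

open Set Function TopologicalSpace

lemma distSet_subtype_subset {X : Type*} [MetricSpace X] (s : Set X) :
    distSet s ⊆ distSet X := by
  rintro r ⟨a, b, rfl⟩
  exact ⟨a, b, (Subtype.dist_eq a b).symm⟩

lemma IsHomogeneous.exists_dist_eq {X : Type*} [MetricSpace X] (hX : IsHomogeneous X)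
    {ι : Type*} [Finite ι] {x y : ι → X} (hxy : ∀ i j, dist (x i) (x j) = dist (y i) (y j))
    (p : X) : ∃ q, ∀ i, dist q (y i) = dist p (x i) := by
  let f : range x → X := fun z => y z.2.choose
  have hf : ∀ i, f ⟨x i, mem_range_self i⟩ = y i := fun i => by
    have hx : x (mem_range_self (f := x) i).choose = x i := (mem_range_self i).choose_spec
    rw [← dist_eq_zero, ← hxy, hx, dist_self]
  have hf_iso : ∀ z w : range x, dist (f z) (f w) = dist (z : X) w := by
    rintro ⟨_, i, rfl⟩ ⟨_, j, rfl⟩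
    rw [hf, hf, hxy]
  obtain ⟨g, hg⟩ := hX _ (finite_range x) f hf_iso
  refine ⟨g p, fun i => ?_⟩
  rw [← hf, ← hg ⟨x i, mem_range_self i⟩, g.dist_eq]

section BackAndForth

variable {U V : Type*} [MetricSpace U] [MetricSpace V]

/-- `s` is the graph of a partial isometry from `U` to `V`. -/
def IsPartialIsometry (s : Set (U × V)) : Prop :=
  ∀ a ∈ s, ∀ b ∈ s, dist a.1 b.1 = dist a.2 b.2

lemma IsPartialIsometry.swap {s : Set (U × V)} (hs : IsPartialIsometry s) :
    IsPartialIsometry (Prod.swap ⁻¹' s) :=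
  fun _ ha _ hb => (hs _ ha _ hb).symm

lemma IsPartialIsometry.insert {s : Set (U × V)} (hs : IsPartialIsometry s) {c : U × V}
    (hc : ∀ a ∈ s, dist c.1 a.1 = dist c.2 a.2) : IsPartialIsometry (insert c s) := by
  rintro a (rfl | ha) b (rfl | hb)
  · simp
  · exact hc b hb
  · rw [dist_comm, hc a ha, dist_comm]
  · exact hs a ha b hb

lemma isPartialIsometry_iUnion {ι : Type*} {s : ι → Set (U × V)}
    (hdir : Directed (· ⊆ ·) s)
    (hs : ∀ i, IsPartialIsometry (s i)) : IsPartialIsometry (⋃ i, s i) := by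
  simp only [IsPartialIsometry, mem_iUnion]
  rintro a ⟨i, ha⟩ b ⟨j, hb⟩
  obtain ⟨k, hik, hjk⟩ := hdir i j
  exact hs k a (hik ha) b (hjk hb)

variable (U V) in
def HasForthProperty : Prop :=
  ∀ s : Set (U × V), s.Finite → IsPartialIsometry s →
    ∀ u : U, ∃ v : V, ∀ a ∈ s, dist v a.2 = dist u a.1

variable (U V) in
abbrev FinitePartialIsometry :=
  {s : Set (U × V) // s.Finite ∧ IsPartialIsometry s}

namespace HasForthProperty

lemma nonempty [Nonempty U] (hUV : HasForthProperty U V) : Nonempty V :=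
  let ⟨v, _⟩ := hUV ∅ finite_empty (by simp [IsPartialIsometry]) (Classical.arbitrary U)
  ⟨v⟩

lemma exists_insert (hUV : HasForthProperty U V) (s : FinitePartialIsometry U V) (u : U) :
    ∃ v, IsPartialIsometry (insert (u, v) s.1) :=
  let ⟨v, hv⟩ := hUV s.1 s.2.1 s.2.2 u
  ⟨v, s.2.2.insert fun a ha => (hv a ha).symm⟩

lemma exists_insert_back (hVU : HasForthProperty V U) (s : FinitePartialIsometry U V) (v : V) :
    ∃ u, IsPartialIsometry (insert (u, v) s.1) :=
  let ⟨u, hu⟩ := hVU _ (s.2.1.preimage Prod.swap_injective.injOn) s.2.2.swap v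
  ⟨u, s.2.2.insert fun a ha => hu a.swap ha⟩

section Construction

variable (hUV : HasForthProperty U V) (hVU : HasForthProperty V U) (x : ℕ → U) (y : ℕ → V)

noncomputable def backAndForth : ℕ → FinitePartialIsometry U V
  | 0 => ⟨∅, finite_empty, by simp [IsPartialIsometry]⟩
  | n + 1 =>
    let s := backAndForth n
    let s' : FinitePartialIsometry U V :=
      ⟨insert (x n, (hUV.exists_insert s (x n)).choose) s.1, s.2.1.insert _,
        (hUV.exists_insert s (x n)).choose_spec⟩
    ⟨insert ((hVU.exists_insert_back s' (y n)).choose, y n) s'.1, s'.2.1.insert _,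
      (hVU.exists_insert_back s' (y n)).choose_spec⟩

lemma backAndForth_subset_succ (n : ℕ) :
    (backAndForth hUV hVU x y n).1 ⊆ (backAndForth hUV hVU x y (n + 1)).1 :=
  (subset_insert _ _).trans (subset_insert _ _)

lemma exists_mem_backAndForth (n : ℕ) :
    (∃ v, (x n, v) ∈ (backAndForth hUV hVU x y (n + 1)).1) ∧
      ∃ u, (u, y n) ∈ (backAndForth hUV hVU x y (n + 1)).1 :=
  ⟨⟨_, mem_insert_of_mem _ (mem_insert _ _)⟩, ⟨_, mem_insert _ _⟩⟩

end Construction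

lemma exists_isPartialIsometry_range_subset_image (hUV : HasForthProperty U V)
    (hVU : HasForthProperty V U) (x : ℕ → U) (y : ℕ → V) :
    ∃ S : Set (U × V), IsPartialIsometry S ∧
      range x ⊆ Prod.fst '' S ∧ range y ⊆ Prod.snd '' S := by
  have hmono : Monotone fun n => (backAndForth hUV hVU x y n).1 :=
    monotone_nat_of_le_succ (backAndForth_subset_succ hUV hVU x y)
  refine ⟨⋃ n, (backAndForth hUV hVU x y n).1,
    isPartialIsometry_iUnion hmono.directed_le fun n => (backAndForth hUV hVU x y n).2.2,
    ?_, ?_⟩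
  · rintro _ ⟨n, rfl⟩
    obtain ⟨v, hv⟩ := (exists_mem_backAndForth hUV hVU x y n).1
    exact ⟨(x n, v), mem_iUnion_of_mem _ hv, rfl⟩
  · rintro _ ⟨n, rfl⟩
    obtain ⟨u, hu⟩ := (exists_mem_backAndForth hUV hVU x y n).2
    exact ⟨(u, y n), mem_iUnion_of_mem _ hu, rfl⟩

end HasForthProperty

end BackAndForth

lemma DenseRange.exists_isometry_extend {U V ι : Type*} [MetricSpace U] [MetricSpace V]
    [CompleteSpace V] {p : ι → U} {q : ι → V} (hp : DenseRange p)
    (hpq : ∀ i j, dist (q i) (q j) = dist (p i) (p j)) :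
    ∃ Φ : U → V, Isometry Φ ∧ ∀ i, Φ (p i) = q i := by
  let f : range p → V := fun z => q z.2.choose
  have hf : ∀ i, f ⟨p i, mem_range_self i⟩ = q i := fun i => by
    have hp' : p (mem_range_self (f := p) i).choose = p i := (mem_range_self i).choose_spec
    rw [← dist_eq_zero, hpq, hp', dist_self]
  have hf_iso : Isometry f := Isometry.of_dist_eq <| by
    rintro ⟨_, i, rfl⟩ ⟨_, j, rfl⟩
    rw [hf, hf, hpq, Subtype.dist_eq]
  have hext : ∀ i, hp.extend f (p i) = q i := fun i => by
    rw [← hf]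
    exact hp.extend_of_ind hf_iso.uniformContinuous ⟨p i, mem_range_self i⟩
  have hcont : Continuous (hp.extend f) :=
    (hp.uniformContinuous_extend hf_iso.uniformContinuous).continuous
  refine ⟨hp.extend f, Isometry.of_dist_eq fun a b => ?_, hext⟩
  refine hp.induction_on₂ (isClosed_eq (by fun_prop) (by fun_prop)) (fun i j => ?_) a b
  rw [hext, hext, hpq]

lemma Isometry.surjective_of_denseRange {U V : Type*} [MetricSpace U] [MetricSpace V]
    [CompleteSpace U] {Φ : U → V} (hΦ : Isometry Φ) (hd : DenseRange Φ) : Surjective Φ := by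
  have hc : IsClosed (range Φ) :=
    ((completeSpace_iff_isComplete_range hΦ.isUniformInducing).1 ‹_›).isClosed
  rw [← range_eq_univ, ← hc.closure_eq, hd.closure_eq]

lemma IsUrysohn.hasForthProperty {U V : Type} [MetricSpace U] [MetricSpace V]
    (hV : IsUrysohn V) (hdist : distSet U ⊆ distSet V) : HasForthProperty U V := by
  intro s hs hsi u
  -- Embed `u` together with the domain of `s` into `V`, then move the embedded domain onto the
  -- range of `s` by homogeneity; the image of `u` follows along.
  let A : Set U := insert u (Prod.fst '' s)
  have : Finite A := ((hs.image Prod.fst).insert u).to_subtype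
  obtain ⟨e, he⟩ := hV.2.2.2 A ((distSet_subtype_subset A).trans hdist)
  have hmem : ∀ a ∈ s, a.1 ∈ A := fun a ha => mem_insert_of_mem _ ⟨a, ha, rfl⟩
  have : Finite s := hs.to_subtype
  obtain ⟨v, hv⟩ := hV.1.exists_dist_eq (x := fun a : s => e ⟨a.1.1, hmem _ a.2⟩)
    (y := fun a : s => a.1.2) (fun a b => by rw [he, Subtype.dist_eq, hsi _ a.2 _ b.2])
    (e ⟨u, mem_insert u _⟩)
  exact ⟨v, fun a ha => by rw [hv ⟨a, ha⟩, he, Subtype.dist_eq]⟩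

theorem HasForthProperty.nonempty_isometryEquiv {U V : Type*} [MetricSpace U] [MetricSpace V]
    [CompleteSpace U] [CompleteSpace V] [SeparableSpace U] [SeparableSpace V]
    (hUV : HasForthProperty U V) (hVU : HasForthProperty V U) : Nonempty (U ≃ᵢ V) := by
  rcases isEmpty_or_nonempty U with hU | hU
  · have : IsEmpty V := not_nonempty_iff.1 fun _ => not_nonempty_iff.2 hU hVU.nonempty
    exact ⟨⟨Equiv.equivOfIsEmpty U V, isometry_subsingleton⟩⟩
  have : Nonempty V := hUV.nonempty
  obtain ⟨S, hS, hxS, hyS⟩ :=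
    hUV.exists_isPartialIsometry_range_subset_image hVU (denseSeq U) (denseSeq V)
  have hp : DenseRange fun a : S => a.1.1 :=
    (denseRange_denseSeq U).mono (hxS.trans (image_eq_range _ _).subset)
  obtain ⟨Φ, hΦ, hΦp⟩ := hp.exists_isometry_extend fun a b => (hS _ a.2 _ b.2).symm
  have hΦd : DenseRange Φ := (denseRange_denseSeq V).mono <| hyS.trans <| by
    rintro _ ⟨a, ha, rfl⟩
    exact ⟨a.1, hΦp ⟨a, ha⟩⟩
  exact ⟨⟨Equiv.ofBijective Φ ⟨hΦ.injective, hΦ.surjective_of_denseRange hΦd⟩, hΦ⟩⟩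

/-- Any two Urysohn metric spaces with the same distance set are isometric. -/
theorem statement2 (U V : Type) [MetricSpace U] [MetricSpace V]
    (hU : IsUrysohn U) (hV : IsUrysohn V) (h : distSet U = distSet V) :
    Nonempty (U ≃ᵢ V) := by
  have := hU.2.1
  have := hV.2.1
  have := hU.2.2.1
  have := hV.2.2.1
  exact (hV.hasForthProperty h.subset).nonempty_isometryEquiv (hU.hasForthProperty h.superset)
end

section
/- Let a, b, c, d, x be nonnegative reals such that the triples (x,a,b) and (x,c,d) are metric. Then max{|a−d|, |b−c|} ≤ min{a+d, b+c}, and for every nonnegative real y, the triples (y,a,d) and (y,b,c) are both metric if and only if max{|a−d|, |b−c|} ≤ y ≤ min{a+d, b+c}. Moreover, if R ⊆ [0,∞) satisfies the 4-values condition and a, b, c, d, x ∈ R, then R ∩ [max{|a−d|,|b−c|}, min{a+d,b+c}] is nonempty. -/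
/-- For nonnegative reals `a, b, c, d, x` with `(x,a,b)` and `(x,c,d)` metric:
`max {|a-d|, |b-c|} ≤ min {a+d, b+c}`; a nonnegative real `y` makes `(y,a,d)` and `(y,b,c)`
metric iff it lies in `[max {|a-d|, |b-c|}, min {a+d, b+c}]`; and if `R` satisfies the
4-values condition and `a, b, c, d, x ∈ R`, then `R` meets this interval. -/
theorem statement11 (a b c d x : ℝ)
    (ha : 0 ≤ a) (hb : 0 ≤ b) (hc : 0 ≤ c) (hd : 0 ≤ d) (hx : 0 ≤ x)
    (h1 : MetricTriple x a b) (h2 : MetricTriple x c d) :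
    max |a - d| |b - c| ≤ min (a + d) (b + c) ∧
      (∀ y : ℝ, 0 ≤ y →
        ((MetricTriple y a d ∧ MetricTriple y b c) ↔
          max |a - d| |b - c| ≤ y ∧ y ≤ min (a + d) (b + c))) ∧
      (∀ R : Set ℝ, R ⊆ Set.Ici 0 → FourValues R →
        a ∈ R → b ∈ R → c ∈ R → d ∈ R → x ∈ R →
        (R ∩ Set.Icc (max |a - d| |b - c|) (min (a + d) (b + c))).Nonempty) := by
  have swap : ∀ u v w : ℝ, MetricTriple u v w → MetricTriple u w v := by
    rintro u v w ⟨hh1, hh2⟩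
    show |u - w| ≤ v ∧ v ≤ u + w
    rw [abs_sub_le_iff] at hh1 ⊢
    exact ⟨⟨by linarith, by linarith⟩, by linarith⟩
  have e1 := h1.1
  have e2 := h1.2
  have e3 := h2.1
  have e4 := h2.2
  rw [abs_sub_le_iff] at e1 e3
  obtain ⟨e1a, e1b⟩ := e1
  obtain ⟨e3a, e3b⟩ := e3
  have key : max |a - d| |b - c| ≤ min (a + d) (b + c) := by
    simp only [max_le_iff, le_min_iff, abs_sub_le_iff]
    and_intros <;> linarith
  have part2 : ∀ y : ℝ, 0 ≤ y →
      ((MetricTriple y a d ∧ MetricTriple y b c) ↔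
        max |a - d| |b - c| ≤ y ∧ y ≤ min (a + d) (b + c)) := by
    intro y hy
    simp only [MetricTriple, max_le_iff, le_min_iff, abs_sub_le_iff]
    constructor
    · rintro ⟨⟨⟨p1, p2⟩, p3⟩, ⟨q1, q2⟩, q3⟩
      and_intros <;> linarith
    · rintro ⟨⟨⟨p1, p2⟩, q1, q2⟩, r1, r2⟩
      and_intros <;> linarith
  refine ⟨key, part2, ?_⟩
  intro R hR h4 haR hbR hcR hdR hxR
  have fin : ∀ y, y ∈ R → MetricTriple y a d → MetricTriple y b c →
      (R ∩ Set.Icc (max |a - d| |b - c|) (min (a + d) (b + c))).Nonempty := by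
    intro y yR t1 t2
    have hy : 0 ≤ y := Set.mem_Ici.mp (hR yR)
    exact ⟨y, yR, Set.mem_Icc.mpr ((part2 y hy).mp ⟨t1, t2⟩)⟩
  rcases le_total a b with hab | hab
  · rcases le_total c d with hcd | hcd
    · rcases le_total b d with hbd | hbd
      · -- d is max
        obtain ⟨y, yR, t1, t2, -⟩ := h4 d c b a hdR hcR hbR haR
          ⟨x, hxR, swap x c d h2, swap x a b h1, hcd, hbd, hab.trans hbd⟩
        exact fin y yR (swap y d a t1) t2
      · -- b is max
        obtain ⟨y, yR, t1, t2, -⟩ := h4 b a d c hbR haR hdR hcR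
          ⟨x, hxR, swap x a b h1, swap x c d h2, hab, hbd, hcd.trans hbd⟩
        exact fin y yR (swap y d a t2) t1
    · rcases le_total b c with hbc | hbc
      · -- c is max
        obtain ⟨y, yR, t1, t2, -⟩ := h4 c d a b hcR hdR haR hbR
          ⟨x, hxR, h2, h1, hcd, hab.trans hbc, hbc⟩
        exact fin y yR t2 (swap y c b t1)
      · -- b is max
        obtain ⟨y, yR, t1, t2, -⟩ := h4 b a d c hbR haR hdR hcR
          ⟨x, hxR, swap x a b h1, swap x c d h2, hab, hcd.trans hbc, hbc⟩
        exact fin y yR (swap y d a t2) t1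
  · rcases le_total c d with hcd | hcd
    · rcases le_total a d with had | had
      · -- d is max
        obtain ⟨y, yR, t1, t2, -⟩ := h4 d c b a hdR hcR hbR haR
          ⟨x, hxR, swap x c d h2, swap x a b h1, hcd, hab.trans had, had⟩
        exact fin y yR (swap y d a t1) t2
      · -- a is max
        obtain ⟨y, yR, t1, t2, -⟩ := h4 a b c d haR hbR hcR hdR
          ⟨x, hxR, h1, h2, hab, hcd.trans had, had⟩
        exact fin y yR t1 (swap y c b t2)
    · rcases le_total a c with hac | hac
      · -- c is max
        obtain ⟨y, yR, t1, t2, -⟩ := h4 c d a b hcR hdR haR hbR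
          ⟨x, hxR, h2, h1, hcd, hac, hab.trans hac⟩
        exact fin y yR t2 (swap y c b t1)
      · -- a is max
        obtain ⟨y, yR, t1, t2, -⟩ := h4 a b c d haR hbR hcR hdR
          ⟨x, hxR, h1, h2, hab, hac, hcd.trans hac⟩
        exact fin y yR t1 (swap y c b t2)
end

section
/- If every restricted type function of a metric space M has a realization in M, then every countable metric space N with dist(N) ⊆ dist(M) admits an isometric embedding into M. -/
/-- If every restricted type function of a metric space `M` has a realization
in `M`, then every countable metric space `N` with `dist(N) ⊆ dist(M)` embeds isometrically
into `M`. -/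
theorem statement12 (M : Type) [MetricSpace M]
    (h : ∀ (F : Set M) (t : F → ℝ), IsRestrictedType M F t → ∃ p : M, Realizes F t p)
    (N : Type) [MetricSpace N] [Countable N] (hN : distSet N ⊆ distSet M) :
    ∃ f : N → M, ∀ a b : N, dist (f a) (f b) = dist a b := by
  classical
  obtain ⟨ι, hι⟩ := exists_injective_nat N
  -- M is nonempty: realize the empty type function
  obtain ⟨p₀, -⟩ := h ∅ (fun _ => 1)
    ⟨Set.finite_empty, fun x => absurd x.2 (Set.notMem_empty _),
      fun x => absurd x.2 (Set.notMem_empty _), fun x => absurd x.2 (Set.notMem_empty _)⟩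
  -- the one-point extension step
  have step : ∀ (n : ℕ) (g : N → M),
      (∀ a b : N, ι a < n → ι b < n → dist (g a) (g b) = dist a b) →
      ∃ g' : N → M,
        (∀ a b : N, ι a < n + 1 → ι b < n + 1 → dist (g' a) (g' b) = dist a b) ∧
        ∀ a : N, ι a < n → g' a = g a := by
    intro n g hg
    by_cases hex : ∃ a : N, ι a = n
    · obtain ⟨a, ha⟩ := hex
      have hginj : ∀ b c : N, ι b < n → ι c < n → g b = g c → b = c := by
        intro b c hb hc hbc
        have h1 := hg b c hb hc
        rw [hbc, dist_self] at h1
        exact dist_eq_zero.mp h1.symm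
      set F : Set M := g '' {b : N | ι b < n} with hF
      have hFfin : F.Finite := by
        apply Set.Finite.image
        exact Set.Finite.preimage (Function.Injective.injOn hι) (Set.finite_Iio n)
      have hrepex : ∀ x : F, ∃ b : N, ι b < n ∧ g b = (x : M) := by
        intro x
        obtain ⟨b, hb, hgb⟩ := x.2
        exact ⟨b, hb, hgb⟩
      choose rep hrep1 hrep2 using hrepex
      set t : F → ℝ := fun x => dist a (rep x) with ht
      have hrepg : ∀ (b : N) (hb : ι b < n), rep ⟨g b, ⟨b, hb, rfl⟩⟩ = b := by
        intro b hb
        exact hginj _ _ (hrep1 _) hb (hrep2 _)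
      have hIsRT : IsRestrictedType M F t := by
        refine ⟨hFfin, ?_, ?_, ?_⟩
        · intro x
          have hne : a ≠ rep x := by
            intro e
            have := hrep1 x
            rw [← e, ha] at this
            exact lt_irrefl _ this
          exact dist_pos.mpr hne
        · intro x y
          constructor
          · have h1 : |dist (rep x) a - dist (rep y) a| ≤ dist (rep x) (rep y) :=
              abs_dist_sub_le _ _ _
            have h2 : dist (x : M) (y : M) = dist (rep x) (rep y) := by
              rw [← hrep2 x, ← hrep2 y]
              exact hg _ _ (hrep1 x) (hrep1 y)
            rw [ht]
            simp only [dist_comm a]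
            rw [h2]
            exact h1
          · have h2 : dist (x : M) (y : M) = dist (rep x) (rep y) := by
              rw [← hrep2 x, ← hrep2 y]
              exact hg _ _ (hrep1 x) (hrep1 y)
            rw [h2, ht]
            calc dist (rep x) (rep y) ≤ dist (rep x) a + dist a (rep y) := dist_triangle _ _ _
              _ = dist a (rep x) + dist a (rep y) := by rw [dist_comm]
        · intro x
          exact hN ⟨a, rep x, rfl⟩
      obtain ⟨p, hp⟩ := h F t hIsRT
      refine ⟨fun b => if ι b < n then g b else p, ?_, ?_⟩
      · -- isometry on the extended domain
        have key : ∀ b : N, ι b < n → dist p (g b) = dist a b := by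
          intro b hb
          have := hp ⟨g b, ⟨b, hb, rfl⟩⟩
          rw [this, ht]
          simp only [hrepg b hb]
        intro b c hb hc
        rcases Nat.lt_succ_iff_lt_or_eq.mp hb with hb' | hb' <;>
          rcases Nat.lt_succ_iff_lt_or_eq.mp hc with hc' | hc'
        · simp only [if_pos hb', if_pos hc']
          exact hg b c hb' hc'
        · have hcb : c = a := hι (hc'.trans ha.symm)
          have hbn : ¬ ι c < n := by rw [hc']; exact lt_irrefl n
          simp only [if_pos hb', if_neg hbn]
          rw [dist_comm, key b hb', hcb, dist_comm]
        · have hba : b = a := hι (hb'.trans ha.symm)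
          have hbn : ¬ ι b < n := by rw [hb']; exact lt_irrefl n
          simp only [if_neg hbn, if_pos hc']
          rw [key c hc', hba]
        · have hba : b = a := hι (hb'.trans ha.symm)
          have hca : c = a := hι (hc'.trans ha.symm)
          have hbn : ¬ ι b < n := by rw [hb']; exact lt_irrefl n
          have hcn : ¬ ι c < n := by rw [hc']; exact lt_irrefl n
          simp only [if_neg hbn, if_neg hcn, dist_self, hba, hca]
      · intro b hb
        simp only [if_pos hb]
    · refine ⟨g, ?_, fun a _ => rfl⟩
      intro b c hb hc
      have hb' : ι b < n := by
        rcases Nat.lt_succ_iff_lt_or_eq.mp hb with hb' | hb'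
        · exact hb'
        · exact absurd ⟨b, hb'⟩ hex
      have hc' : ι c < n := by
        rcases Nat.lt_succ_iff_lt_or_eq.mp hc with hc' | hc'
        · exact hc'
        · exact absurd ⟨c, hc'⟩ hex
      exact hg b c hb' hc'
  choose step' hstep1 hstep2 using step
  -- iterate the step
  let G : ∀ n : ℕ, {g : N → M // ∀ a b : N, ι a < n → ι b < n → dist (g a) (g b) = dist a b} :=
    fun n => Nat.rec ⟨fun _ => p₀, fun a b ha _ => absurd ha (Nat.not_lt_zero _)⟩
      (fun n gp => ⟨step' n gp.1 gp.2, hstep1 n gp.1 gp.2⟩) n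
  have hGsucc : ∀ n : ℕ, ∀ a : N, ι a < n → (G (n + 1)).1 a = (G n).1 a := by
    intro n a ha
    exact hstep2 n (G n).1 (G n).2 a ha
  have hGmono : ∀ (m n : ℕ), n ≤ m → ∀ a : N, ι a < n → (G m).1 a = (G n).1 a := by
    intro m
    induction m with
    | zero => intro n hn a ha; omega
    | succ m ih =>
      intro n hn a ha
      rcases Nat.lt_succ_iff_lt_or_eq.mp (Nat.lt_succ_of_le hn) with hn' | hn'
      · have hle : n ≤ m := Nat.lt_succ_iff.mp hn'
        rw [hGsucc m a (lt_of_lt_of_le ha hle), ih n hle a ha]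
      · rw [hn']
  refine ⟨fun a => (G (ι a + 1)).1 a, ?_⟩
  intro a b
  set n := max (ι a) (ι b) + 1 with hn
  have ha : ι a < n := by omega
  have hb : ι b < n := by omega
  have h1 : (G n).1 a = (G (ι a + 1)).1 a :=
    hGmono n (ι a + 1) (by omega) a (by omega)
  have h2 : (G n).1 b = (G (ι b + 1)).1 b :=
    hGmono n (ι b + 1) (by omega) b (by omega)
  show dist ((G (ι a + 1)).1 a) ((G (ι b + 1)).1 b) = dist a b
  rw [← h1, ← h2]
  exact (G n).2 a b ha hb
end
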